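/- Let P ⊆ ℚ^n (or ℝ^n) be an n-dimensional simplex containing the origin in its interior. If the barycenter of P is the origin, then the barycenter of the dual polytope P^∨ = {y : ⟨x, y⟩ ≥ -1 for all x ∈ P} is also the origin. -/

import Mathlib

open MeasureTheory

/-- Dot product on `Fin n → ℝ`. -/
def dot {n : ℕ} (x y : Fin n → ℝ) : ℝ := ∑ i, x i * y i

/-- The dual polytope (polar with the convention `⟨x,y⟩ ≥ -1`). -/
def dualPoly {n : ℕ} (P : Set (Fin n → ℝ)) : Set (Fin n → ℝ) :=
  {y | ∀ x ∈ P, dot x y ≥ -1}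

/-- The barycenter (centroid) of a set in `ℝⁿ`. -/
noncomputable def bary {n : ℕ} (P : Set (Fin n → ℝ)) : Fin n → ℝ :=
  (volume P).toReal⁻¹ • ∫ x in P, x

/-!
Barycenters commute with affine automorphisms (change of variables), and every permutation of
the vertices of a simplex is realised by an affine automorphism. Hence the barycenter of a
simplex has equal barycentric coordinates: it is the average of the vertices.

If this average is `0`, each barycentric coordinate `λᵢ` equals `1 / (n + 1)` at `0`, and the
dual is the simplex with vertices `bᵢ = (n + 1) ∇λᵢ`, characterised by
`⟨x, bᵢ⟩ = (n + 1) λᵢ(x) - 1`. Since `∑ λᵢ ≡ 1`, the gradients sum to `0`, so the vertices of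
the dual average to `0` as well.
-/

open Set

theorem bary_image_affineEquiv {n : ℕ} (f : (Fin n → ℝ) ≃ᵃ[ℝ] (Fin n → ℝ))
    {S : Set (Fin n → ℝ)} (hS : IsCompact S) (hS0 : volume S ≠ 0) :
    bary (f '' S) = f (bary S) := by
  set L : (Fin n → ℝ) →L[ℝ] (Fin n → ℝ) :=
    (f.linear : (Fin n → ℝ) →ₗ[ℝ] (Fin n → ℝ)).toContinuousLinearMap
  set c := f 0
  have hf : ⇑f = fun x => L x + c := f.toAffineMap.decomp
  have hfS : ∀ x ∈ S, HasFDerivWithinAt f L S x := fun x _ => by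
    rw [hf]; exact (L.hasFDerivAt.add_const _).hasFDerivWithinAt
  have hdet : |L.det| ≠ 0 := abs_ne_zero.2 (LinearEquiv.isUnit_det' f.linear).ne_zero
  have hv : (volume S).toReal ≠ 0 := ENNReal.toReal_ne_zero.2 ⟨hS0, hS.measure_lt_top.ne⟩
  have change_of_variables {F : Type} [NormedAddCommGroup F] [NormedSpace ℝ F]
      (g : (Fin n → ℝ) → F) : ∫ y in f '' S, g y = ∫ x in S, |L.det| • g (f x) :=
    integral_image_eq_integral_abs_det_fderiv_smul volume hS.measurableSet hfS f.injective.injOn g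
  have hvol : (volume (f '' S)).toReal = |L.det| * (volume S).toReal := by
    simpa [Measure.real, mul_comm] using change_of_variables (fun _ => (1 : ℝ))
  have hid : IntegrableOn (fun x => x) S := continuous_id.continuousOn.integrableOn_compact hS
  have hmean : ∫ x in S, (L x + c) = L (∫ x in S, x) + (volume S).toReal • c := by
    rw [integral_add (L.integrable_comp hid) (integrableOn_const hS.measure_lt_top.ne),
      L.integral_comp_comm hid, setIntegral_const]
    rfl
  calc bary (f '' S)
      = (|L.det| * (volume S).toReal)⁻¹ •
          |L.det| • (L (∫ x in S, x) + (volume S).toReal • c) := by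
        rw [bary, change_of_variables (fun x => x), hvol, integral_smul, hf, hmean]
    _ = f (bary S) := by
        rw [smul_smul, mul_inv_rev, mul_assoc, inv_mul_cancel₀ hdet, mul_one, smul_add, ← map_smul,
          smul_smul, inv_mul_cancel₀ hv, one_smul, bary, hf]

theorem AffineBasis.exists_affineEquiv_coords_eq {ι k V P : Type*} [Fintype ι] [Ring k]
    [AddCommGroup V] [Module k V] [AddTorsor V P] (B B' : AffineBasis ι k P) :
    ∃ F : P ≃ᵃ[k] P, ∀ x, B'.coords (F x) = B.coords x := by
  let transfer (C C' : AffineBasis ι k P) : P →ᵃ[k] P :=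
    (Finset.univ.affineCombination k C').comp C.coords
  have coords_transfer (C C' : AffineBasis ι k P) x :
      C'.coords (transfer C C' x) = C.coords x := by
    ext i
    exact C'.coord_apply_combination_of_mem (Finset.mem_univ i) (C.sum_coord_apply_eq_one x)
  have transfer_transfer (C C' : AffineBasis ι k P) x : transfer C' C (transfer C C' x) = x := by
    change Finset.univ.affineCombination k C (C'.coords _) = x
    rw [coords_transfer]
    exact C.affineCombination_coord_eq_self x
  refine ⟨AffineEquiv.ofBijective (φ := transfer B B') ?_, coords_transfer B B'⟩
  exact Function.bijective_iff_has_inverse.2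
    ⟨transfer B' B, transfer_transfer B B', transfer_transfer B' B⟩

theorem bary_convexHull_affineBasis {n : ℕ} {ι : Type*} [Fintype ι]
    (B : AffineBasis ι ℝ (Fin n → ℝ)) :
    bary (convexHull ℝ (range B)) = Finset.univ.centroid ℝ B := by
  classical
  set S := convexHull ℝ (range B)
  have hS : IsCompact S := (finite_range B).isCompact_convexHull (𝕜 := ℝ)
  have hS0 : volume S ≠ 0 := (Measure.measure_pos_of_nonempty_interior _
    (interior_convexHull_nonempty_iff_affineSpan_eq_top.2 B.tot)).ne'
  have coord_perm (σ : Equiv.Perm ι) i : B.coord (σ i) (bary S) = B.coord i (bary S) := by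
    set B' := B.reindex σ.symm
    obtain ⟨F, hF⟩ := B.exists_affineEquiv_coords_eq B'
    have hF' x i : B'.coord i (F x) = B.coord i x := congrFun (hF x) i
    have hFB : F ∘ B = B' := funext fun j => B'.ext_elem fun i => by
      rw [Function.comp_apply, hF', B.coord_apply, B'.coord_apply]
    have hFS : F '' S = S := by
      rw [← AffineEquiv.coe_toAffineMap, AffineMap.image_convexHull, ← range_comp,
        AffineEquiv.coe_toAffineMap, hFB, B.coe_reindex, σ.symm.symm.surjective.range_comp]
    rw [← hF' (bary S) i, ← bary_image_affineEquiv F hS hS0, hFS, B.coord_reindex]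
    simp
  have hsum := B.sum_coord_apply_eq_one (bary S)
  apply B.ext_elem
  intro i
  rw [Finset.sum_congr rfl fun j _ => by simpa using coord_perm (Equiv.swap i j) i,
    Finset.sum_const, Finset.card_univ, nsmul_eq_mul] at hsum
  rw [B.coord_apply_centroid (Finset.mem_univ i), Finset.card_univ]
  exact eq_inv_of_mul_eq_one_right hsum

theorem affineIndependent_of_affineSpan_eq_top {k V P ι : Type*} [DivisionRing k]
    [AddCommGroup V] [Module k V] [AddTorsor V P] [FiniteDimensional k V] [Fintype ι] {p : ι → P}
    (hp : affineSpan k (range p) = ⊤) (hc : Fintype.card ι = Module.finrank k V + 1) :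
    AffineIndependent k p := by
  rw [affineIndependent_iff_finrank_vectorSpan_eq k p hc, ← direction_affineSpan, hp,
    AffineSubspace.direction_top, finrank_top]

section Dual

variable {n : ℕ}

theorem dot_eq_dotProduct (x y : Fin n → ℝ) : dot x y = x ⬝ᵥ y := rfl

theorem eq_of_forall_dot_eq {u w : Fin n → ℝ} (h : ∀ x, dot x u = dot x w) : u = w := by
  ext j
  simpa [dot_eq_dotProduct] using h (Pi.single j 1)

theorem convex_dualPoly (s : Set (Fin n → ℝ)) : Convex ℝ (dualPoly s) := by
  have : dualPoly s = ⋂ x ∈ s, {y | -1 ≤ x ⬝ᵥ y} := by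
    ext; simp [dualPoly, dot_eq_dotProduct]
  rw [this]
  exact convex_iInter₂ fun x _ => convex_halfSpace_ge
    ⟨fun y z => dotProduct_add x y z, fun c y => dotProduct_smul c x y⟩ _

theorem dualPoly_convexHull (s : Set (Fin n → ℝ)) : dualPoly (convexHull ℝ s) = dualPoly s := by
  refine (subset_antisymm fun y hy x hx => hy x (subset_convexHull ℝ s hx)) fun y hy x hx => ?_
  have hconv : Convex ℝ {x : Fin n → ℝ | -1 ≤ x ⬝ᵥ y} := convex_halfSpace_ge
    ⟨fun x z => add_dotProduct x z y, fun c x => smul_dotProduct c x y⟩ _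
  exact convexHull_min hy hconv hx

theorem zero_mem_interior_dualPoly {s : Set (Fin n → ℝ)} (hs : s.Finite) :
    (0 : Fin n → ℝ) ∈ interior (dualPoly s) := by
  have hnhds x : {y : Fin n → ℝ | -1 < dot x y} ∈ nhds 0 :=
    (isOpen_lt continuous_const (by unfold dot; fun_prop)).mem_nhds (by simp [dot])
  rw [mem_interior_iff_mem_nhds]
  filter_upwards [(Filter.biInter_mem hs).2 fun x _ => hnhds x] with y hy x hx
  exact (mem_iInter₂.1 hy x hx).le

variable {ι : Type*} (B : AffineBasis ι ℝ (Fin n → ℝ))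

/-- The gradient of `B.coord i`, scaled so that `⟨x, dualVertex B i⟩ = -1` on the facet
`B.coord i x = 0`. -/
noncomputable def dualVertex (i : ι) : Fin n → ℝ :=
  (B.coord i 0)⁻¹ • (dotProductEquiv ℝ (Fin n)).symm (B.coord i).linear

theorem dot_dualVertex {i : ι} (hi : B.coord i 0 ≠ 0) (x : Fin n → ℝ) :
    dot x (dualVertex B i) = B.coord i x / B.coord i 0 - 1 := by
  have hlin : (B.coord i).linear x = B.coord i x - B.coord i 0 := by
    simpa using (B.coord i).linearMap_vsub x 0
  rw [dualVertex, dot_eq_dotProduct, dotProduct_smul, dotProduct_comm,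
    ← dotProductEquiv_apply_apply, LinearEquiv.apply_symm_apply, hlin, smul_eq_mul]
  field_simp

variable [Fintype ι]

theorem sum_coord_mul_dot_add_one (x y : Fin n → ℝ) :
    ∑ k, B.coord k x * (dot (B k) y + 1) = dot x y + 1 := by
  calc ∑ k, B.coord k x * (dot (B k) y + 1)
      = dot (∑ k, B.coord k x • B k) y + ∑ k, B.coord k x := by
        simp only [mul_add, mul_one, Finset.sum_add_distrib, dot_eq_dotProduct, sum_dotProduct,
          smul_dotProduct, smul_eq_mul]
    _ = dot x y + 1 := by rw [B.linear_combination_coord_eq_self, B.sum_coord_apply_eq_one]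

theorem sum_coord_smul_dualVertex (h0 : ∀ i, B.coord i 0 ≠ 0) :
    ∑ i, B.coord i 0 • dualVertex B i = 0 := by
  refine eq_of_forall_dot_eq fun x => ?_
  calc dot x (∑ i, B.coord i 0 • dualVertex B i)
      = ∑ i, B.coord i 0 * dot x (dualVertex B i) := by
        simp [dot_eq_dotProduct, dotProduct_sum, dotProduct_smul]
    _ = ∑ i, (B.coord i x - B.coord i 0) := by
        refine Finset.sum_congr rfl fun i _ => ?_
        rw [dot_dualVertex B (h0 i), mul_sub, mul_div_cancel₀ _ (h0 i), mul_one]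
    _ = dot x 0 := by
        rw [Finset.sum_sub_distrib, B.sum_coord_apply_eq_one, B.sum_coord_apply_eq_one, sub_self,
          dot_eq_dotProduct, dotProduct_zero]

theorem dualPoly_convexHull_affineBasis (h0 : ∀ i, 0 < B.coord i 0) :
    dualPoly (convexHull ℝ (range B)) = convexHull ℝ (range (dualVertex B)) := by
  have hne i : B.coord i 0 ≠ 0 := (h0 i).ne'
  rw [dualPoly_convexHull]
  refine subset_antisymm (fun y hy => ?_) (convexHull_min ?_ (convex_dualPoly _))
  · set t := fun k => B.coord k 0 * (dot (B k) y + 1)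
    have ht0 k : 0 ≤ t k := mul_nonneg (h0 k).le (by linarith [hy _ (mem_range_self k)])
    have ht1 : ∑ k, t k = 1 := by
      simpa [t, dot_eq_dotProduct] using sum_coord_mul_dot_add_one B 0 y
    have hy_eq : ∑ k, t k • dualVertex B k = y := by
      refine eq_of_forall_dot_eq fun x => ?_
      calc dot x (∑ k, t k • dualVertex B k)
          = ∑ k, t k * (B.coord k x / B.coord k 0 - 1) := by
            rw [dot_eq_dotProduct, dotProduct_sum]
            refine Finset.sum_congr rfl fun k _ => ?_
            rw [dotProduct_smul, ← dot_eq_dotProduct, dot_dualVertex B (hne k), smul_eq_mul]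
        _ = ∑ k, B.coord k x * (dot (B k) y + 1) - ∑ k, t k := by
            rw [← Finset.sum_sub_distrib]
            refine Finset.sum_congr rfl fun k _ => ?_
            simp only [t]
            rw [mul_sub, mul_one, mul_comm (B.coord k 0), mul_assoc, mul_div_cancel₀ _ (hne k),
              mul_comm]
        _ = dot x y := by rw [sum_coord_mul_dot_add_one B, ht1, add_sub_cancel_right]
    rw [← hy_eq]
    exact (convex_convexHull ℝ _).sum_mem (fun k _ => ht0 k) ht1
      fun k _ => subset_convexHull ℝ _ (mem_range_self k)
  · rintro _ ⟨i, rfl⟩ _ ⟨k, rfl⟩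
    rw [dot_dualVertex B (hne i), ge_iff_le, le_sub_iff_add_le, neg_add_cancel]
    exact div_nonneg (by classical rw [B.coord_apply]; split_ifs <;> norm_num) (h0 i).le

end Dual

theorem stmt0_general {n : ℕ} (a : Fin (n + 1) → (Fin n → ℝ))
    (ha : AffineIndependent ℝ a)
    (P : Set (Fin n → ℝ)) (hP : P = convexHull ℝ (Set.range a))
    (hbary : bary P = 0) :
    bary (dualPoly P) = 0 := by
  let B : AffineBasis (Fin (n + 1)) ℝ (Fin n → ℝ) :=
    ⟨a, ha, ha.affineSpan_eq_top_iff_card_eq_finrank_add_one.2 (by simp)⟩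
  have hPB : P = convexHull ℝ (range B) := hP
  have hcoord i : B.coord i 0 = ((n : ℝ) + 1)⁻¹ := by
    rw [← hbary, hPB, bary_convexHull_affineBasis, B.coord_apply_centroid (Finset.mem_univ i)]
    simp
  have hcoord_pos i : 0 < B.coord i 0 := by rw [hcoord]; positivity
  have hdual : dualPoly P = convexHull ℝ (range (dualVertex B)) := by
    rw [hPB]
    exact dualPoly_convexHull_affineBasis B hcoord_pos
  have hspan : affineSpan ℝ (range (dualVertex B)) = ⊤ := by
    rw [← interior_convexHull_nonempty_iff_affineSpan_eq_top, ← hdual, hP, dualPoly_convexHull]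
    exact ⟨0, zero_mem_interior_dualPoly (finite_range a)⟩
  let B' : AffineBasis (Fin (n + 1)) ℝ (Fin n → ℝ) :=
    ⟨dualVertex B, affineIndependent_of_affineSpan_eq_top hspan (by simp), hspan⟩
  have hsum : ∑ i, ((n : ℝ) + 1)⁻¹ • dualVertex B i = 0 := by
    simpa only [hcoord] using sum_coord_smul_dualVertex B fun i => (hcoord_pos i).ne'
  rw [hdual]
  change bary (convexHull ℝ (range B')) = 0
  rw [bary_convexHull_affineBasis, Finset.centroid_def,
    Finset.affineCombination_eq_linear_combination _ _ _
      (Finset.sum_centroidWeights_eq_one_of_card_eq_add_one ℝ _ (n := n) (by simp))]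
  simp only [Finset.centroidWeights_apply, Finset.card_univ, Fintype.card_fin, Nat.cast_add,
    Nat.cast_one]
  exact hsum

theorem stmt0 {n : ℕ} (a : Fin (n + 1) → (Fin n → ℝ))
    (ha : AffineIndependent ℝ a)
    (P : Set (Fin n → ℝ)) (hP : P = convexHull ℝ (Set.range a))
    (h0 : (0 : Fin n → ℝ) ∈ interior P)
    (hbary : bary P = 0) :
    bary (dualPoly P) = 0 :=
  stmt0_general a ha P hP hbary
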